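/- arXiv:1610.04811 — 3 statements merged into one kernel-verified Lean document; each statement's English description precedes it below -/
import Mathlib

section
/- Let S be an m×m density matrix (positive semidefinite Hermitian with unit trace) with rank(S) ≤ l. Then for every density matrix S₁, one has ‖S₁ − S‖_1 ≤ 2√(2l) · ‖S₁ − S‖_2. -/
open scoped ENNReal ComplexOrder

noncomputable def schattenNorm {n : Type*} [Fintype n] [DecidableEq n]
    (p : ℝ≥0∞) (A : Matrix n n ℂ) : ℝ :=
  if p = ⊤ then ⨆ i, Real.sqrt ((Matrix.isHermitian_conjTranspose_mul_self A).eigenvalues i)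
  else (∑ i, Real.sqrt ((Matrix.isHermitian_conjTranspose_mul_self A).eigenvalues i) ^ p.toReal)
    ^ (1 / p.toReal)

def IsDensityMatrix {n : Type*} [Fintype n] [DecidableEq n] (S : Matrix n n ℂ) : Prop :=
  S.PosSemidef ∧ S.trace = 1

noncomputable def matLog {n : Type*} [Fintype n] [DecidableEq n]
    (A : Matrix n n ℂ) : Matrix n n ℂ :=
  if hA : A.IsHermitian then
    (hA.eigenvectorUnitary : Matrix n n ℂ) *
      Matrix.diagonal (fun i => (Real.log (hA.eigenvalues i) : ℂ)) *
      (star hA.eigenvectorUnitary : Matrix n n ℂ)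
  else 0

noncomputable def relEnt {n : Type*} [Fintype n] [DecidableEq n]
    (S₁ S₂ : Matrix n n ℂ) : ℝ :=
  ((S₁ * (matLog S₁ - matLog S₂)).trace).re

/-! Write `A = S₁ - S` with eigenvalues `μᵢ`. Since `∑ μᵢ = tr A = 0`, the nuclear norm `∑ |μᵢ|`
is twice the mass of the negative eigenvalues, which by Cauchy–Schwarz is at most `√k ‖A‖₂`, `k`
being their number. On the span of the corresponding eigenvectors `A` is negative definite while
`A + S = S₁ ⪰ 0`, so this span meets `ker S` trivially and `k ≤ rank S ≤ l`. -/

open scoped Matrix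
open Finset Polynomial

theorem Finset.sum_abs_le_two_mul_sqrt_card_neg_mul_sqrt_sum_sq {ι : Type*} [Fintype ι]
    (f : ι → ℝ) (hf : ∑ i, f i = 0) :
    ∑ i, |f i| ≤ 2 * √(#{i | f i < 0} : ℝ) * √(∑ i, f i ^ 2) := by
  set N : Finset ι := {i | f i < 0}
  have hsplit : ∑ i, |f i| = 2 * ∑ i ∈ N, |f i| := by
    have habs := sum_filter_add_sum_filter_not univ (fun i => f i < 0) (fun i => |f i|)
    have hsum := sum_filter_add_sum_filter_not univ (fun i => f i < 0) f
    have hneg : ∑ i ∈ N, |f i| = -∑ i ∈ N, f i := by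
      rw [← sum_neg_distrib]
      exact sum_congr rfl fun i hi => abs_of_neg (mem_filter.1 hi).2
    have hnonneg : ∑ i ∈ univ.filter (fun i => ¬f i < 0), |f i|
        = ∑ i ∈ univ.filter (fun i => ¬f i < 0), f i :=
      sum_congr rfl fun i hi => abs_of_nonneg (not_lt.1 (mem_filter.1 hi).2)
    linarith
  have hCS : (∑ i ∈ N, |f i|) ^ 2 ≤ #N * ∑ i, f i ^ 2 := calc
    _ ≤ #N * ∑ i ∈ N, |f i| ^ 2 := sq_sum_le_card_mul_sum_sq
    _ ≤ #N * ∑ i, f i ^ 2 := by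
      simp_rw [sq_abs]
      gcongr
      exact subset_univ N
  rw [hsplit, mul_assoc, ← Real.sqrt_mul (Nat.cast_nonneg _)]
  gcongr
  exact Real.le_sqrt_of_sq_le hCS

namespace Matrix.IsHermitian

variable {𝕜 : Type*} [RCLike 𝕜] {n : Type*} [Fintype n] [DecidableEq n] {A : Matrix n n 𝕜}

lemma charpoly_mul_self (hA : A.IsHermitian) :
    (A * A).charpoly = ∏ i, (X - C ((hA.eigenvalues i ^ 2 : ℝ) : 𝕜)) := by
  conv_lhs => rw [hA.spectral_theorem, ← map_mul, diagonal_mul_diagonal,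
    Unitary.conjStarAlgAut_apply, charpoly_mul_comm, ← mul_assoc]
  simp [charpoly_diagonal, sq]

lemma sum_eigenvalues_conjTranspose_mul_self (hA : A.IsHermitian) (g : ℝ → ℝ) :
    ∑ i, g ((isHermitian_conjTranspose_mul_self A).eigenvalues i) =
      ∑ i, g (hA.eigenvalues i ^ 2) := by
  have hcharpoly : (Aᴴ * A).charpoly = ∏ i, (X - C ((hA.eigenvalues i ^ 2 : ℝ) : 𝕜)) := by
    rw [hA.eq, hA.charpoly_mul_self]
  have hroots := (isHermitian_conjTranspose_mul_self A).roots_charpoly_eq_eigenvalues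
  rw [hcharpoly, roots_prod _ _ (prod_ne_zero_iff.2 fun i _ => X_sub_C_ne_zero _)] at hroots
  simp only [roots_X_sub_C, Multiset.bind_singleton] at hroots
  have hsum := congrArg (fun s => (s.map (g ∘ RCLike.re)).sum) hroots
  simpa [Multiset.map_map, Function.comp_def] using hsum.symm

lemma re_star_dotProduct_mulVec_eigenvectorUnitary_mulVec (hA : A.IsHermitian) (e : n → 𝕜) :
    RCLike.re (star (hA.eigenvectorUnitary *ᵥ e) ⬝ᵥ (A *ᵥ (hA.eigenvectorUnitary *ᵥ e)))
      = ∑ i, hA.eigenvalues i * ‖e i‖ ^ 2 := by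
  set U : Matrix n n 𝕜 := (hA.eigenvectorUnitary : Matrix n n 𝕜)
  have hAU : A * U = U * diagonal (RCLike.ofReal ∘ hA.eigenvalues) := by
    conv_lhs => rw [hA.spectral_theorem, Unitary.conjStarAlgAut_apply]
    simp [U, mul_assoc]
  rw [mulVec_mulVec, hAU, ← mulVec_mulVec, star_mulVec, dotProduct_mulVec, vecMul_vecMul,
    show Uᴴ * U = 1 from Unitary.coe_star_mul_self _, vecMul_one]
  simp only [dotProduct, mulVec_diagonal, Pi.star_apply, Function.comp_apply, map_sum]
  refine sum_congr rfl fun i _ => ?_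
  rw [mul_left_comm, RCLike.star_def, RCLike.conj_mul, ← RCLike.ofReal_pow, RCLike.re_ofReal_mul,
    RCLike.ofReal_re]

lemma eq_zero_of_posSemidef_add_of_mulVec_eq_zero (hA : A.IsHermitian) {S : Matrix n n 𝕜}
    (hAS : (A + S).PosSemidef) {e : n → 𝕜} (he : ∀ i, 0 ≤ hA.eigenvalues i → e i = 0)
    (hSe : S *ᵥ ((hA.eigenvectorUnitary : Matrix n n 𝕜) *ᵥ e) = 0) : e = 0 := by
  set μ := hA.eigenvalues
  have hterm : ∀ i, μ i * ‖e i‖ ^ 2 ≤ 0 := fun i => by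
    by_cases hi : 0 ≤ μ i
    · simp [he i hi]
    · exact mul_nonpos_of_nonpos_of_nonneg (not_le.1 hi).le (sq_nonneg _)
  have hsum : 0 ≤ ∑ i, μ i * ‖e i‖ ^ 2 := by
    rw [← hA.re_star_dotProduct_mulVec_eigenvectorUnitary_mulVec, ← add_zero (A *ᵥ _), ← hSe,
      ← add_mulVec]
    exact hAS.re_dotProduct_nonneg _
  have hzero := (sum_eq_zero_iff_of_nonpos fun i _ => hterm i).1
    (le_antisymm (sum_nonpos fun i _ => hterm i) hsum)
  funext i
  by_cases hi : 0 ≤ μ i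
  · exact he i hi
  · simpa [(not_le.1 hi).ne] using hzero i (mem_univ i)

lemma card_eigenvalues_neg_le_rank (hA : A.IsHermitian) {S : Matrix n n 𝕜}
    (hAS : (A + S).PosSemidef) : #{i | hA.eigenvalues i < 0} ≤ S.rank := by
  set N : Finset n := {i | hA.eigenvalues i < 0}
  let φ : (N → 𝕜) →ₗ[𝕜] n → 𝕜 := S.mulVecLin ∘ₗ
    (hA.eigenvectorUnitary : Matrix n n 𝕜).mulVecLin ∘ₗ Function.ExtendByZero.linearMap 𝕜 Subtype.val
  have hφ : Function.Injective φ := by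
    refine (injective_iff_map_eq_zero φ).2 fun c hc => ?_
    have hext : Function.extend Subtype.val c 0 = 0 :=
      hA.eq_zero_of_posSemidef_add_of_mulVec_eq_zero hAS
        (fun i hi => Function.extend_apply' _ _ _ fun ⟨a, ha⟩ =>
          not_lt.2 hi (ha ▸ (mem_filter.1 a.2).2)) hc
    funext a
    simpa [Subtype.val_injective.extend_apply] using congrFun hext a
  calc #N = Module.finrank 𝕜 (LinearMap.range φ) := by
        rw [LinearMap.finrank_range_of_inj hφ]; simp
    _ ≤ Module.finrank 𝕜 (LinearMap.range S.mulVecLin) :=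
        Submodule.finrank_mono (LinearMap.range_comp_le_range _ _)
    _ = S.rank := rfl

end Matrix.IsHermitian

namespace Matrix.IsHermitian

variable {n : Type*} [Fintype n] [DecidableEq n] {A : Matrix n n ℂ}

lemma schattenNorm_one (hA : A.IsHermitian) :
    schattenNorm 1 A = ∑ i, |hA.eigenvalues i| := by
  simp [schattenNorm, hA.sum_eigenvalues_conjTranspose_mul_self Real.sqrt, Real.sqrt_sq_eq_abs]

lemma schattenNorm_two (hA : A.IsHermitian) :
    schattenNorm 2 A = √(∑ i, hA.eigenvalues i ^ 2) := by
  rw [schattenNorm, if_neg ENNReal.ofNat_ne_top, ENNReal.toReal_ofNat]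
  simp_rw [Real.rpow_two]
  rw [hA.sum_eigenvalues_conjTranspose_mul_self (fun x => √x ^ 2)]
  simp_rw [Real.sq_sqrt (sq_nonneg _), Real.sqrt_eq_rpow]

end Matrix.IsHermitian

/-- For a density matrix S with rank at most l and any other density matrix S₁,
the nuclear norm of the difference is bounded by 2√(2l) times its Frobenius norm. -/
theorem nuclear_le_sqrt_rank_mul_frobenius {m : ℕ} (l : ℕ)
    (S S₁ : Matrix (Fin m) (Fin m) ℂ)
    (hS : IsDensityMatrix S) (hS₁ : IsDensityMatrix S₁)
    (hrank : S.rank ≤ l) :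
    schattenNorm 1 (S₁ - S) ≤ 2 * Real.sqrt (2 * l) * schattenNorm 2 (S₁ - S) := by
  obtain ⟨hSpos, hStr⟩ := hS
  obtain ⟨hS₁pos, hS₁tr⟩ := hS₁
  have hA : (S₁ - S).IsHermitian := hS₁pos.isHermitian.sub hSpos.isHermitian
  have htr : ∑ i, hA.eigenvalues i = 0 := by
    have h := hA.trace_eq_sum_eigenvalues
    rw [Matrix.trace_sub, hS₁tr, hStr, sub_self, ← RCLike.ofReal_sum] at h
    exact RCLike.ofReal_eq_zero.1 h.symm
  have hneg : #{i | hA.eigenvalues i < 0} ≤ l :=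
    (hA.card_eigenvalues_neg_le_rank (by rwa [sub_add_cancel])).trans hrank
  rw [hA.schattenNorm_one, hA.schattenNorm_two]
  calc _ ≤ 2 * √(#{i | hA.eigenvalues i < 0} : ℝ) * √(∑ i, hA.eigenvalues i ^ 2) :=
        sum_abs_le_two_mul_sqrt_card_neg_mul_sqrt_sum_sq _ htr
    _ ≤ 2 * √(2 * l) * √(∑ i, hA.eigenvalues i ^ 2) := by
        gcongr
        exact_mod_cast hneg.trans (Nat.le_mul_of_pos_left l two_pos)
end

section
/- Let S be an m×m density matrix with rank(S) ≤ l, supported on the l-dimensional subspace L spanned by its eigenvectors with nonzero eigenvalues. Define the projection operators 𝒫_L^⊥(A) = P_{L^⊥} A P_{L^⊥} and 𝒫_L(A) = A − P_{L^⊥} A P_{L^⊥}, where P_{L^⊥} is the orthogonal projector onto L^⊥. Then for every density matrix S₁, ‖𝒫_L^⊥(S₁)‖_1 ≤ ‖𝒫_L(S₁ − S)‖_1. -/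
open scoped ENNReal ComplexOrder

/-! Because `P * S = 0` and both matrices have trace one, the trace of
`(S₁ - S) - P * (S₁ - S) * P` is `-tr (P * S₁ * P)`. The left-hand side is the trace of the
positive semidefinite matrix `P * S₁ * P`, and the trace norm of a Hermitian matrix, the sum of
the absolute values of its eigenvalues, dominates the absolute value of its trace. -/

namespace Matrix

section RCLike

variable {n 𝕜 : Type*} [Fintype n] [DecidableEq n] [RCLike 𝕜]

lemma IsHermitian.trace_cfc {A : Matrix n n 𝕜} (hA : A.IsHermitian) (f : ℝ → ℝ) :
    (cfc f A).trace = ∑ i, (f (hA.eigenvalues i) : 𝕜) := by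
  rw [hA.cfc_eq, IsHermitian.cfc, Unitary.conjStarAlgAut_apply, trace_mul_cycle,
    Unitary.coe_star_mul_self, one_mul, trace_diagonal]
  rfl

open scoped MatrixOrder in
lemma IsHermitian.sqrt_conjTranspose_mul_self {A : Matrix n n 𝕜} (hA : A.IsHermitian) :
    CFC.sqrt (Aᴴ * A) = cfc (|·| : ℝ → ℝ) A :=
  CFC.sqrt_unique
    (by rw [← cfc_mul .., hA.eq, cfc_congr fun x _ => abs_mul_abs_self x, cfc_mul .., cfc_id' ℝ A])
    (cfc_nonneg fun x _ => abs_nonneg x)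

end RCLike

variable {n : Type*} [Fintype n] [DecidableEq n]

open scoped MatrixOrder in
lemma schattenNorm_one_eq_re_trace_sqrt (A : Matrix n n ℂ) :
    schattenNorm 1 A = (CFC.sqrt (Aᴴ * A)).trace.re := by
  have hA := posSemidef_conjTranspose_mul_self A
  rw [CFC.sqrt_eq_cfc, cfc_nnreal_eq_real _ (Aᴴ * A) hA.nonneg, hA.1.trace_cfc]
  simp [schattenNorm, fun i => max_eq_left (hA.eigenvalues_nonneg i)]

lemma IsHermitian.schattenNorm_one_eq_sum_abs_eigenvalues {A : Matrix n n ℂ}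
    (hA : A.IsHermitian) : schattenNorm 1 A = ∑ i, |hA.eigenvalues i| := by
  rw [schattenNorm_one_eq_re_trace_sqrt, hA.sqrt_conjTranspose_mul_self, hA.trace_cfc]
  simp

lemma PosSemidef.schattenNorm_one_eq_re_trace {A : Matrix n n ℂ} (hA : A.PosSemidef) :
    schattenNorm 1 A = A.trace.re := by
  rw [hA.1.schattenNorm_one_eq_sum_abs_eigenvalues, hA.1.trace_eq_sum_eigenvalues]
  simp [abs_of_nonneg (hA.eigenvalues_nonneg _)]

lemma IsHermitian.abs_re_trace_le_schattenNorm_one {A : Matrix n n ℂ} (hA : A.IsHermitian) :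
    |A.trace.re| ≤ schattenNorm 1 A := by
  rw [hA.schattenNorm_one_eq_sum_abs_eigenvalues, hA.trace_eq_sum_eigenvalues]
  simpa using Finset.abs_sum_le_sum_abs _ _

end Matrix

theorem proj_complement_nuclear_le_general {m : ℕ}
    (S S₁ P : Matrix (Fin m) (Fin m) ℂ)
    (hS : IsDensityMatrix S) (hS₁ : IsDensityMatrix S₁)
    (hP : P.IsHermitian) (hPS : P * S = 0) :
    schattenNorm 1 (P * S₁ * P) ≤ schattenNorm 1 ((S₁ - S) - P * (S₁ - S) * P) := by
  have hPS₁P : (P * S₁ * P).PosSemidef := by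
    simpa only [hP.eq] using hS₁.1.conjTranspose_mul_mul_same P
  have hD : (S₁ - S).IsHermitian := hS₁.1.1.sub hS.1.1
  have hB : ((S₁ - S) - P * (S₁ - S) * P).IsHermitian := by
    refine hD.sub ?_
    simpa only [hP.eq] using Matrix.isHermitian_conjTranspose_mul_mul P hD
  have htrace : ((S₁ - S) - P * (S₁ - S) * P).trace = -(P * S₁ * P).trace := by
    rw [Matrix.mul_sub, Matrix.sub_mul, hPS, Matrix.zero_mul, sub_zero, Matrix.trace_sub,
      Matrix.trace_sub, hS.2, hS₁.2, sub_self, zero_sub]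
  calc schattenNorm 1 (P * S₁ * P) = (P * S₁ * P).trace.re := hPS₁P.schattenNorm_one_eq_re_trace
    _ = -((S₁ - S) - P * (S₁ - S) * P).trace.re := by rw [htrace, Complex.neg_re, neg_neg]
    _ ≤ |((S₁ - S) - P * (S₁ - S) * P).trace.re| := neg_le_abs _
    _ ≤ schattenNorm 1 ((S₁ - S) - P * (S₁ - S) * P) := hB.abs_re_trace_le_schattenNorm_one

/-- For a density matrix S with rank at most l, supported on the subspace L spanned by its
eigenvectors with nonzero eigenvalues, and P the orthogonal projector onto L^⊥
(characterized by: P is Hermitian, idempotent, annihilates S, and rank P + rank S = m),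
for every density matrix S₁ one has ‖𝒫_L^⊥(S₁)‖₁ ≤ ‖𝒫_L(S₁ − S)‖₁, where
𝒫_L^⊥(A) = P A P and 𝒫_L(A) = A − P A P. -/
theorem proj_complement_nuclear_le {m : ℕ} (l : ℕ)
    (S S₁ P : Matrix (Fin m) (Fin m) ℂ)
    (hS : IsDensityMatrix S) (hS₁ : IsDensityMatrix S₁)
    (hrank : S.rank ≤ l)
    (hP : P.IsHermitian) (hP2 : P * P = P) (hPS : P * S = 0)
    (hPrank : P.rank + S.rank = m) :
    schattenNorm 1 (P * S₁ * P) ≤ schattenNorm 1 ((S₁ - S) - P * (S₁ - S) * P) :=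
  proj_complement_nuclear_le_general S S₁ P hS hS₁ hP hPS
end

section
/- Let ρ be an m×m density matrix with rank(ρ) ≤ r, supported on subspace L, and let ρ̂ be any density matrix. Then ‖ρ̂ − ρ‖_1 ≤ 2‖𝒫_L(ρ̂ − ρ)‖_1 ≤ 4r‖ρ̂ − ρ‖_∞, where 𝒫_L(A) = A − P_{L^⊥} A P_{L^⊥}. -/
open scoped ENNReal ComplexOrder

/-! Write `Δ = ρ̂ - ρ`, `Q = 1 - P` and `E = Δ - PΔP`. Since `Pρ = 0`, the compression
`PΔP = Pρ̂P` is positive semidefinite, so its trace norm is at most its trace, which is `-tr E`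
because `tr Δ = 0`; the triangle inequality for `Δ = E + PΔP` gives `‖Δ‖₁ ≤ 2‖E‖₁`. For the
second inequality, `E = QΔ + PΔQ` where both terms have rank at most `rank Q ≤ r` and operator
norm at most `‖Δ‖`, and `‖X‖₁ ≤ rank X · ‖X‖`.

The trace norm is the sum of the singular values `σᵢ = √λᵢ(AᴴA)`. Diagonalising `AᴴA` by a
unitary `V` gives `AV = UΣ` with `‖U‖ ≤ 1`; hence `|tr(BA)| ≤ ‖B‖ ‖A‖₁`, with equality attained
at `B = VUᴴ`, and this duality yields the triangle inequality for `‖·‖₁`. -/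

open scoped Matrix.Norms.L2Operator

namespace Matrix

variable {n : Type*} [Fintype n] [DecidableEq n]

lemma norm_diag_le_l2_opNorm (X : Matrix n n ℂ) (i : n) : ‖X i i‖ ≤ ‖X‖ := by
  set e : EuclideanSpace ℂ n := EuclideanSpace.single i 1
  have he : ‖e‖ = 1 := by simp [e]
  have hX : X i i = inner ℂ e (toEuclideanCLM (𝕜 := ℂ) X e) := by
    simp [e, EuclideanSpace.inner_single_left, mulVec_single]
  calc ‖X i i‖ ≤ ‖e‖ * ‖toEuclideanCLM (𝕜 := ℂ) X e‖ := hX ▸ norm_inner_le_norm _ _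
    _ ≤ ‖e‖ * (‖X‖ * ‖e‖) := by gcongr; exact (toEuclideanCLM (𝕜 := ℂ) X).le_opNorm e
    _ = ‖X‖ := by rw [he, one_mul, mul_one]

lemma norm_trace_mul_diagonal_le (X : Matrix n n ℂ) (d : n → ℂ) :
    ‖(X * diagonal d).trace‖ ≤ ‖X‖ * ∑ i, ‖d i‖ := by
  rw [trace, Finset.mul_sum]
  refine (norm_sum_le _ _).trans (Finset.sum_le_sum fun i _ => ?_)
  rw [diag_apply, mul_diagonal, norm_mul]
  gcongr
  exact norm_diag_le_l2_opNorm X i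

lemma norm_trace_mul_conj_diagonal_le {W : Matrix n n ℂ} (hW : W ∈ unitaryGroup n ℂ)
    (B : Matrix n n ℂ) (d : n → ℂ) :
    ‖(B * (W * diagonal d * star W)).trace‖ ≤ ‖B‖ * ∑ i, ‖d i‖ := by
  rw [← mul_assoc, ← mul_assoc, trace_mul_cycle, ← mul_assoc,
    ← CStarRing.norm_mem_unitary_mul B (Unitary.star_mem hW),
    ← CStarRing.norm_mul_mem_unitary (star W * B) hW]
  exact norm_trace_mul_diagonal_le _ _

noncomputable def singularValues (A : Matrix n n ℂ) (i : n) : ℝ :=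
  √((isHermitian_conjTranspose_mul_self A).eigenvalues i)

noncomputable def traceNorm (A : Matrix n n ℂ) : ℝ := ∑ i, A.singularValues i

noncomputable def rightSingularVectors (A : Matrix n n ℂ) : Matrix n n ℂ :=
  (isHermitian_conjTranspose_mul_self A).eigenvectorUnitary

-- Column `j` is `A vⱼ / σⱼ`, or `0` when `σⱼ = 0` (as `0⁻¹ = 0`).
noncomputable def leftSingularVectors (A : Matrix n n ℂ) : Matrix n n ℂ :=
  A * A.rightSingularVectors * diagonal fun i => ((A.singularValues i)⁻¹ : ℂ)

lemma singularValues_nonneg (A : Matrix n n ℂ) (i : n) : 0 ≤ A.singularValues i :=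
  Real.sqrt_nonneg _

lemma sq_singularValues (A : Matrix n n ℂ) (i : n) :
    A.singularValues i ^ 2 = (isHermitian_conjTranspose_mul_self A).eigenvalues i :=
  Real.sq_sqrt ((posSemidef_conjTranspose_mul_self A).eigenvalues_nonneg i)

lemma rightSingularVectors_mem_unitaryGroup (A : Matrix n n ℂ) :
    A.rightSingularVectors ∈ unitaryGroup n ℂ :=
  (isHermitian_conjTranspose_mul_self A).eigenvectorUnitary.2

lemma conjTranspose_rightSingularVectors_mul_mul (A : Matrix n n ℂ) :
    A.rightSingularVectorsᴴ * (Aᴴ * A) * A.rightSingularVectors =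
      diagonal fun i => ((A.singularValues i ^ 2 : ℝ) : ℂ) := by
  have h := (isHermitian_conjTranspose_mul_self A).conjStarAlgAut_star_eigenvectorUnitary
  rw [Unitary.conjStarAlgAut_star_apply] at h
  simp only [sq_singularValues]
  exact h

lemma conjTranspose_leftSingularVectors (A : Matrix n n ℂ) :
    A.leftSingularVectorsᴴ =
      (diagonal fun i => ((A.singularValues i)⁻¹ : ℂ)) * A.rightSingularVectorsᴴ * Aᴴ := by
  rw [leftSingularVectors, conjTranspose_mul, conjTranspose_mul, diagonal_conjTranspose,
    mul_assoc]
  congr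
  ext i
  simp

lemma conjTranspose_leftSingularVectors_mul_mul (A : Matrix n n ℂ) :
    A.leftSingularVectorsᴴ * A * A.rightSingularVectors =
      diagonal fun i => (A.singularValues i : ℂ) := by
  rw [conjTranspose_leftSingularVectors, mul_assoc _ Aᴴ, mul_assoc, mul_assoc,
    ← mul_assoc _ (Aᴴ * A), conjTranspose_rightSingularVectors_mul_mul, diagonal_mul_diagonal]
  congr! 2 with i
  push_cast
  rw [sq, ← mul_assoc, inv_mul_mul_self]

lemma conjTranspose_leftSingularVectors_mul_self (A : Matrix n n ℂ) :
    A.leftSingularVectorsᴴ * A.leftSingularVectors =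
      diagonal fun i => ((A.singularValues i)⁻¹ * A.singularValues i : ℂ) := by
  have h : A.leftSingularVectorsᴴ * A.leftSingularVectors =
      (diagonal fun i => ((A.singularValues i)⁻¹ : ℂ)) *
        (A.rightSingularVectorsᴴ * (Aᴴ * A) * A.rightSingularVectors) *
          diagonal fun i => ((A.singularValues i)⁻¹ : ℂ) := by
    rw [conjTranspose_leftSingularVectors, leftSingularVectors]
    noncomm_ring
  rw [h, conjTranspose_rightSingularVectors_mul_mul, diagonal_mul_diagonal, diagonal_mul_diagonal]
  congr! 2 with i
  push_cast
  rw [sq, ← mul_assoc, inv_mul_mul_self, mul_comm]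

lemma norm_leftSingularVectors_le (A : Matrix n n ℂ) : ‖A.leftSingularVectors‖ ≤ 1 := by
  have h : ‖A.leftSingularVectors‖ * ‖A.leftSingularVectors‖ ≤ 1 := by
    rw [← l2_opNorm_conjTranspose_mul_self, conjTranspose_leftSingularVectors_mul_self,
      l2_opNorm_diagonal]
    refine (pi_norm_le_iff_of_nonneg zero_le_one).2 fun i => ?_
    by_cases hi : (A.singularValues i : ℂ) = 0 <;> simp [hi]
  nlinarith [norm_nonneg A.leftSingularVectors]

lemma mul_rightSingularVectors (A : Matrix n n ℂ) :
    A * A.rightSingularVectors =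
      A.leftSingularVectors * diagonal fun i => (A.singularValues i : ℂ) := by
  set c : n → ℂ := fun i => 1 - (A.singularValues i : ℂ)⁻¹ * A.singularValues i
  set Z := A * A.rightSingularVectors * diagonal c
  have hsub : A * A.rightSingularVectors -
      A.leftSingularVectors * diagonal (fun i => (A.singularValues i : ℂ)) = Z := by
    rw [leftSingularVectors, mul_assoc _ (diagonal _), diagonal_mul_diagonal, ← mul_one_sub,
      ← diagonal_one, diagonal_sub]
  have hZZ : Zᴴ * Z = 0 := by
    have h : Zᴴ * Z =
        (diagonal c)ᴴ * (A.rightSingularVectorsᴴ * (Aᴴ * A) * A.rightSingularVectors) *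
          diagonal c := by
      simp only [Z, conjTranspose_mul]
      noncomm_ring
    rw [h, conjTranspose_rightSingularVectors_mul_mul, diagonal_conjTranspose,
      diagonal_mul_diagonal, diagonal_mul_diagonal, ← diagonal_zero]
    congr 1
    ext i
    by_cases hi : (A.singularValues i : ℂ) = 0 <;> simp [c, hi]
  rw [← sub_eq_zero, hsub, ← conjTranspose_mul_self_eq_zero, hZZ]

lemma trace_conjTranspose_mul_mul_of_mem_unitaryGroup {V : Matrix n n ℂ}
    (hV : V ∈ unitaryGroup n ℂ) (M : Matrix n n ℂ) : (Vᴴ * M * V).trace = M.trace := by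
  rw [trace_mul_cycle, ← star_eq_conjTranspose, Unitary.mul_star_self_of_mem hV, one_mul]

lemma norm_trace_mul_le (B A : Matrix n n ℂ) : ‖(B * A).trace‖ ≤ ‖B‖ * A.traceNorm := by
  have hV := A.rightSingularVectors_mem_unitaryGroup
  rw [← trace_conjTranspose_mul_mul_of_mem_unitaryGroup hV, mul_assoc, mul_assoc,
    mul_rightSingularVectors, ← mul_assoc, ← mul_assoc]
  refine (norm_trace_mul_diagonal_le _ _).trans <|
    mul_le_mul ?_ ?_ (by positivity) (norm_nonneg B)
  · calc ‖A.rightSingularVectorsᴴ * B * A.leftSingularVectors‖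
        ≤ ‖A.rightSingularVectorsᴴ * B‖ * ‖A.leftSingularVectors‖ := norm_mul_le _ _
      _ ≤ ‖B‖ := by
        rw [← star_eq_conjTranspose, CStarRing.norm_mem_unitary_mul _ (Unitary.star_mem hV)]
        exact mul_le_of_le_one_right (norm_nonneg B) A.norm_leftSingularVectors_le
  · simp only [Complex.norm_real, Real.norm_of_nonneg (A.singularValues_nonneg _), traceNorm,
      le_refl]

lemma traceNorm_nonneg (A : Matrix n n ℂ) : 0 ≤ A.traceNorm :=
  Finset.sum_nonneg fun i _ => A.singularValues_nonneg i

lemma exists_norm_le_one_trace_mul_eq (A : Matrix n n ℂ) :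
    ∃ B : Matrix n n ℂ, ‖B‖ ≤ 1 ∧ (B * A).trace = A.traceNorm := by
  refine ⟨A.rightSingularVectors * A.leftSingularVectorsᴴ, ?_, ?_⟩
  · rw [CStarRing.norm_mem_unitary_mul _ A.rightSingularVectors_mem_unitaryGroup,
      l2_opNorm_conjTranspose]
    exact A.norm_leftSingularVectors_le
  · rw [mul_assoc, trace_mul_comm, conjTranspose_leftSingularVectors_mul_mul, trace_diagonal,
      traceNorm]
    push_cast
    rfl

lemma traceNorm_add_le (A B : Matrix n n ℂ) : (A + B).traceNorm ≤ A.traceNorm + B.traceNorm := by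
  obtain ⟨C, hC, hCAB⟩ := (A + B).exists_norm_le_one_trace_mul_eq
  calc (A + B).traceNorm = ((C * A).trace + (C * B).trace).re := by
        rw [← trace_add, ← mul_add, hCAB, Complex.ofReal_re]
    _ ≤ ‖(C * A).trace‖ + ‖(C * B).trace‖ :=
        (Complex.re_le_norm _).trans (norm_add_le _ _)
    _ ≤ ‖C‖ * A.traceNorm + ‖C‖ * B.traceNorm :=
        add_le_add (norm_trace_mul_le C A) (norm_trace_mul_le C B)
    _ ≤ A.traceNorm + B.traceNorm := by
        gcongr <;> exact mul_le_of_le_one_left (traceNorm_nonneg _) hC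

lemma norm_trace_le_traceNorm (A : Matrix n n ℂ) : ‖A.trace‖ ≤ A.traceNorm := by
  simpa only [one_mul] using (norm_trace_mul_le 1 A).trans
    (mul_le_of_le_one_left A.traceNorm_nonneg (IsStarProjection.norm_le 1 (.one _)))

lemma PosSemidef.norm_trace_mul_le {M : Matrix n n ℂ} (hM : M.PosSemidef) (B : Matrix n n ℂ) :
    ‖(B * M).trace‖ ≤ ‖B‖ * M.trace.re := by
  have h := norm_trace_mul_conj_diagonal_le hM.1.eigenvectorUnitary.2 B
    (RCLike.ofReal ∘ hM.1.eigenvalues)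
  rw [← Unitary.conjStarAlgAut_apply (S := ℂ), ← hM.1.spectral_theorem] at h
  convert h using 2
  rw [hM.1.trace_eq_sum_eigenvalues, Complex.re_sum]
  refine Finset.sum_congr rfl fun i _ => ?_
  simp [Real.norm_of_nonneg (hM.eigenvalues_nonneg i)]

lemma PosSemidef.traceNorm_le {M : Matrix n n ℂ} (hM : M.PosSemidef) :
    M.traceNorm ≤ M.trace.re := by
  obtain ⟨C, hC, hCM⟩ := M.exists_norm_le_one_trace_mul_eq
  have htr : 0 ≤ M.trace.re := (Complex.le_def.1 hM.trace_nonneg).1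
  calc M.traceNorm = (C * M).trace.re := by rw [hCM, Complex.ofReal_re]
    _ ≤ ‖(C * M).trace‖ := Complex.re_le_norm _
    _ ≤ ‖C‖ * M.trace.re := hM.norm_trace_mul_le C
    _ ≤ M.trace.re := mul_le_of_le_one_left htr hC

lemma norm_mul_self_eq_norm_sq_singularValues (A : Matrix n n ℂ) :
    ‖A‖ * ‖A‖ = ‖fun i => ((A.singularValues i ^ 2 : ℝ) : ℂ)‖ := by
  have hV := A.rightSingularVectors_mem_unitaryGroup
  rw [← l2_opNorm_conjTranspose_mul_self, ← l2_opNorm_diagonal,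
    ← conjTranspose_rightSingularVectors_mul_mul, mul_assoc]
  exact ((CStarRing.norm_mem_unitary_mul _ (Unitary.star_mem hV)).trans
    (CStarRing.norm_mul_mem_unitary _ hV)).symm

lemma singularValues_le_norm (A : Matrix n n ℂ) (i : n) : A.singularValues i ≤ ‖A‖ := by
  have h := norm_le_pi_norm (fun i => ((A.singularValues i ^ 2 : ℝ) : ℂ)) i
  rw [← norm_mul_self_eq_norm_sq_singularValues, Complex.norm_real,
    Real.norm_of_nonneg (by positivity)] at h
  nlinarith [A.singularValues_nonneg i, norm_nonneg A]

lemma iSup_singularValues (A : Matrix n n ℂ) : ⨆ i, A.singularValues i = ‖A‖ := by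
  refine le_antisymm (Real.iSup_le A.singularValues_le_norm (norm_nonneg A)) ?_
  set c := ⨆ i, A.singularValues i
  have hc : 0 ≤ c := Real.iSup_nonneg A.singularValues_nonneg
  have h : ‖A‖ * ‖A‖ ≤ c * c := by
    rw [norm_mul_self_eq_norm_sq_singularValues]
    refine (pi_norm_le_iff_of_nonneg (by positivity)).2 fun i => ?_
    have hi : A.singularValues i ≤ c := le_ciSup (Set.finite_range _).bddAbove i
    rw [Complex.norm_real, Real.norm_of_nonneg (by positivity)]
    nlinarith [A.singularValues_nonneg i]
  nlinarith [norm_nonneg A]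

lemma traceNorm_le_rank_mul_norm (A : Matrix n n ℂ) : A.traceNorm ≤ A.rank * ‖A‖ := by
  set hAA := isHermitian_conjTranspose_mul_self A
  set S := Finset.univ.filter fun i => hAA.eigenvalues i ≠ 0
  have hcard : S.card = A.rank := by
    rw [← rank_conjTranspose_mul_self A, hAA.rank_eq_card_non_zero_eigs, Fintype.card_subtype]
  have hsum : A.traceNorm = ∑ i ∈ S, A.singularValues i := by
    refine (Finset.sum_filter_of_ne (p := fun i => hAA.eigenvalues i ≠ 0)
      fun i _ hi h0 => hi ?_).symm
    rw [singularValues, h0, Real.sqrt_zero]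
  rw [hsum, ← hcard, ← nsmul_eq_mul]
  exact Finset.sum_le_card_nsmul _ _ _ fun i _ => A.singularValues_le_norm i

lemma traceNorm_le_two_mul_traceNorm_sub {Δ M : Matrix n n ℂ} (hM : M.PosSemidef)
    (hΔ : Δ.trace = 0) : Δ.traceNorm ≤ 2 * (Δ - M).traceNorm := by
  have hM' : M.traceNorm ≤ (Δ - M).traceNorm :=
    calc M.traceNorm ≤ M.trace.re := hM.traceNorm_le
      _ = -(Δ - M).trace.re := by simp [trace_sub, hΔ]
      _ ≤ ‖(Δ - M).trace‖ := (neg_le_abs _).trans (Complex.abs_re_le_norm _)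
      _ ≤ (Δ - M).traceNorm := norm_trace_le_traceNorm _
  have h := traceNorm_add_le (Δ - M) M
  rw [sub_add_cancel] at h
  linarith

lemma traceNorm_sub_mul_mul_le {P : Matrix n n ℂ} (hP : IsStarProjection P) {r : ℕ}
    (hr : (1 - P).rank ≤ r) (Δ : Matrix n n ℂ) :
    (Δ - P * Δ * P).traceNorm ≤ 2 * r * ‖Δ‖ := by
  have traceNorm_le (X : Matrix n n ℂ) (hXr : X.rank ≤ r) (hX : ‖X‖ ≤ ‖Δ‖) :
      X.traceNorm ≤ r * ‖Δ‖ :=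
    X.traceNorm_le_rank_mul_norm.trans <|
      mul_le_mul (by exact_mod_cast hXr) hX (norm_nonneg X) (Nat.cast_nonneg r)
  have hPn := IsStarProjection.norm_le P hP
  have hQn := IsStarProjection.norm_le (1 - P) hP.one_sub
  have hQΔ : ‖(1 - P) * Δ‖ ≤ ‖Δ‖ :=
    (norm_mul_le _ _).trans (mul_le_of_le_one_left (norm_nonneg Δ) hQn)
  have hPΔQ : ‖P * Δ * (1 - P)‖ ≤ ‖Δ‖ :=
    (norm_mul_le _ _).trans <| (mul_le_of_le_one_right (norm_nonneg _) hQn).trans <|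
      (norm_mul_le _ _).trans (mul_le_of_le_one_left (norm_nonneg Δ) hPn)
  have hsplit : Δ - P * Δ * P = (1 - P) * Δ + P * Δ * (1 - P) := by noncomm_ring
  have h1 := traceNorm_le _ ((rank_mul_le_left _ _).trans hr) hQΔ
  have h2 := traceNorm_le _ ((rank_mul_le_right _ _).trans hr) hPΔQ
  have h := traceNorm_add_le ((1 - P) * Δ) (P * Δ * (1 - P))
  rw [← hsplit] at h
  linarith

end Matrix

open Matrix

lemma schattenNorm_one_eq_traceNorm {n : Type*} [Fintype n] [DecidableEq n] (A : Matrix n n ℂ) :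
    schattenNorm 1 A = A.traceNorm := by
  simp [schattenNorm, traceNorm, singularValues]

lemma schattenNorm_top_eq_norm {n : Type*} [Fintype n] [DecidableEq n] (A : Matrix n n ℂ) :
    schattenNorm ⊤ A = ‖A‖ := by
  rw [← iSup_singularValues]
  simp [schattenNorm, singularValues]

/-- If ρ is a density matrix of rank at most r supported on L, and P is the orthogonal
projector onto L^⊥, then for every density matrix ρ̂:
‖ρ̂ − ρ‖₁ ≤ 2‖𝒫_L(ρ̂−ρ)‖₁ ≤ 4r‖ρ̂−ρ‖_∞, where 𝒫_L(A) = A − P A P. -/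
theorem nuclear_le_proj_le_rank_mul_op {m : ℕ} (r : ℕ)
    (ρ ρhat P : Matrix (Fin m) (Fin m) ℂ)
    (hρ : IsDensityMatrix ρ) (hρhat : IsDensityMatrix ρhat)
    (hrank : ρ.rank ≤ r)
    (hP : P.IsHermitian) (hP2 : P * P = P) (hPρ : P * ρ = 0)
    (hPrank : P.rank + ρ.rank = m) :
    schattenNorm 1 (ρhat - ρ) ≤ 2 * schattenNorm 1 ((ρhat - ρ) - P * (ρhat - ρ) * P) ∧
    2 * schattenNorm 1 ((ρhat - ρ) - P * (ρhat - ρ) * P)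
      ≤ 4 * r * schattenNorm ⊤ (ρhat - ρ) := by
  have hPproj : IsStarProjection P := ⟨hP2, hP⟩
  have hcompress : P * (ρhat - ρ) * P = P * ρhat * P := by
    rw [mul_sub, sub_mul, hPρ, zero_mul, sub_zero]
  have hpsd : (P * (ρhat - ρ) * P).PosSemidef := by
    simpa only [hcompress, hP.eq] using hρhat.1.mul_mul_conjTranspose_same P
  have htr : (ρhat - ρ).trace = 0 := by rw [trace_sub, hρhat.2, hρ.2, sub_self]
  have hQrank : (1 - P).rank ≤ r := by
    have := rank_add_rank_le_card_of_mul_eq_zero hPproj.one_sub_mul_self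
    rw [Fintype.card_fin] at this
    omega
  rw [schattenNorm_one_eq_traceNorm, schattenNorm_one_eq_traceNorm, schattenNorm_top_eq_norm]
  refine ⟨traceNorm_le_two_mul_traceNorm_sub hpsd htr, ?_⟩
  have := traceNorm_sub_mul_mul_le hPproj hQrank (ρhat - ρ)
  linarith
end
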